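/- Let F be a field. Suppose x1, x2, x3, u are elements of F satisfying u + x1·x2 = 0, 1 + x2·x3 = 0, and 1 + x3·x1 = 0. Then x3 ≠ 0 and u = −x3⁻². Conversely, for any nonzero y ∈ F, there exist x1, x2, x3 ∈ F satisfying these three equations with u = −y⁻². Hence the set of possible values of u is exactly {−y² : y ∈ F, y ≠ 0}. -/

import Mathlib

/-! Each of the equations `1 + x₂ x₃ = 0` and `1 + x₃ x₁ = 0` says that `-x₂`, resp. `-x₁`, is an
inverse of `x₃`; hence `x₃ ≠ 0`, `x₁ = x₂ = -x₃⁻¹`, and the first equation forces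
`u = -x₁ x₂ = -x₃⁻²`. Conversely `(x₁, x₂, x₃) = (-y⁻¹, -y⁻¹, y)` solves the system for
`u = -y⁻²`, and `y ↦ y⁻¹` permutes the units, so the values of `u` are the `-y²`, `y ≠ 0`. -/

section DivisionRing

variable {R : Type*} [DivisionRing R] {a b : R}

theorem neg_mul_eq_one_of_one_add_mul_eq_zero (h : 1 + a * b = 0) : -a * b = 1 := by
  rw [neg_mul, eq_neg_of_add_eq_zero_right h, neg_neg]

theorem right_ne_zero_of_one_add_mul_eq_zero (h : 1 + a * b = 0) : b ≠ 0 :=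
  right_ne_zero_of_mul_eq_one (neg_mul_eq_one_of_one_add_mul_eq_zero h)

theorem eq_neg_inv_of_one_add_mul_eq_zero (h : 1 + a * b = 0) : a = -b⁻¹ := by
  rw [← eq_inv_of_mul_eq_one_left (neg_mul_eq_one_of_one_add_mul_eq_zero h), neg_neg]

theorem eq_neg_inv_of_one_add_mul_eq_zero' (h : 1 + b * a = 0) : a = -b⁻¹ := by
  have hba : b * -a = 1 := by rw [mul_neg, eq_neg_of_add_eq_zero_right h, neg_neg]
  rw [← eq_inv_of_mul_eq_one_right hba, neg_neg]

theorem leftTrefoil_aug_eq_neg_inv_sq {x₁ x₂ x₃ u : R} (h₁ : u + x₁ * x₂ = 0)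
    (h₂ : 1 + x₂ * x₃ = 0) (h₃ : 1 + x₃ * x₁ = 0) : x₃ ≠ 0 ∧ u = -x₃⁻¹ ^ 2 := by
  refine ⟨right_ne_zero_of_one_add_mul_eq_zero h₂, ?_⟩
  rw [eq_neg_of_add_eq_zero_left h₁, eq_neg_inv_of_one_add_mul_eq_zero' h₃,
    eq_neg_inv_of_one_add_mul_eq_zero h₂]
  noncomm_ring

theorem leftTrefoil_aug_of_ne_zero {y : R} (hy : y ≠ 0) :
    -y⁻¹ ^ 2 + -y⁻¹ * -y⁻¹ = 0 ∧ 1 + -y⁻¹ * y = 0 ∧ 1 + y * -y⁻¹ = 0 := by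
  refine ⟨by noncomm_ring, ?_, ?_⟩
  · rw [neg_mul, inv_mul_cancel₀ hy, add_neg_cancel]
  · rw [mul_neg, mul_inv_cancel₀ hy, add_neg_cancel]

end DivisionRing

/-- The ungraded augmentation variety of the left-handed trefoil.
If `u + x1*x2 = 0`, `1 + x2*x3 = 0`, `1 + x3*x1 = 0` in a field `F`, then
`x3 ≠ 0` and `u = -(x3⁻¹)^2`; conversely every `-(y⁻¹)^2` with `y ≠ 0` arises;
hence the set of possible `u` is exactly `{-y^2 : y ∈ F*}`. -/
theorem augmentation_left_trefoil_variety (F : Type*) [Field F] :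
    (∀ x1 x2 x3 u : F, u + x1 * x2 = 0 → 1 + x2 * x3 = 0 → 1 + x3 * x1 = 0 →
      x3 ≠ 0 ∧ u = -(x3⁻¹) ^ 2) ∧
    (∀ y : F, y ≠ 0 → ∃ x1 x2 x3 : F,
      (-(y⁻¹) ^ 2) + x1 * x2 = 0 ∧ 1 + x2 * x3 = 0 ∧ 1 + x3 * x1 = 0) ∧
    {u : F | ∃ x1 x2 x3 : F, u + x1 * x2 = 0 ∧ 1 + x2 * x3 = 0 ∧ 1 + x3 * x1 = 0}
      = {z : F | ∃ y : F, y ≠ 0 ∧ z = -(y ^ 2)} := by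
  refine ⟨fun _ _ _ _ => leftTrefoil_aug_eq_neg_inv_sq,
    fun y hy => ⟨_, _, _, leftTrefoil_aug_of_ne_zero hy⟩, Set.ext fun u => ⟨?_, ?_⟩⟩
  · rintro ⟨x₁, x₂, x₃, h₁, h₂, h₃⟩
    obtain ⟨hx₃, rfl⟩ := leftTrefoil_aug_eq_neg_inv_sq h₁ h₂ h₃
    exact ⟨x₃⁻¹, inv_ne_zero hx₃, rfl⟩
  · rintro ⟨y, hy, rfl⟩
    have h := leftTrefoil_aug_of_ne_zero (inv_ne_zero hy)
    rw [inv_inv] at h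
    exact ⟨_, _, _, h⟩
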